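/- arXiv:1309.0081 — 7 statements merged into one kernel-verified Lean document; each statement's English description precedes it below -/
import Mathlib

section
/- For a permutation schedule of jobs J_1,...,J_n on a three-machine flow shop with jobs started as early as possible, the makespan equals max over pairs 1 ≤ u ≤ v ≤ n of ( sum_{j=1}^{u} p_{1j} + sum_{j=u}^{v} p_{2j} + sum_{j=v}^{n} p_{3j} ). -/
/-!
A machine that starts job `j` as soon as `j` is released (at time `R j`) and its predecessor is
done completes job `m` at `max_{u ≤ m} (R u + p u + ⋯ + p m)`: the maximum is attained at the
last job `u ≤ m` for which the machine had to wait for the release. Apply this to machine 2,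
whose release times are the completion times on machine 1, then to machine 3, whose release
times are the completion times on machine 2, and merge the two nested maxima into one maximum
over pairs `u ≤ v`.
-/

open Finset

namespace Fin

variable {n m : ℕ}

theorem Iic_mk_succ (h : m + 1 < n) :
    Iic (⟨m + 1, h⟩ : Fin n) = insert ⟨m + 1, h⟩ (Iic ⟨m, by omega⟩) := by
  ext k
  simp only [mem_insert, mem_Iic, Fin.le_def, Fin.ext_iff]
  omega

theorem Icc_mk_succ_right (h : m + 1 < n) {u : Fin n} (hu : u ≤ ⟨m, by omega⟩) :
    Icc u ⟨m + 1, h⟩ = insert ⟨m + 1, h⟩ (Icc u ⟨m, by omega⟩) := by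
  ext k
  simp only [mem_insert, mem_Icc, Fin.le_def, Fin.ext_iff] at hu ⊢
  omega

end Fin

theorem Finset.sup'_filter_le_eq_sup'_sup'_Iic {ι α : Type*} [Fintype ι] [Preorder ι]
    [LocallyFiniteOrderBot ι] [DecidablePred fun uv : ι × ι => uv.1 ≤ uv.2] [Nonempty ι]
    [LinearOrder α]
    (f : ι × ι → α) (H : (univ.filter fun uv : ι × ι => uv.1 ≤ uv.2).Nonempty) :
    (univ.filter fun uv : ι × ι => uv.1 ≤ uv.2).sup' H f =
      univ.sup' univ_nonempty fun v => (Iic v).sup' nonempty_Iic fun u => f (u, v) :=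
  eq_of_forall_ge_iff fun c => by
    simp only [sup'_le_iff, mem_filter, mem_univ, true_and, mem_Iic, Prod.forall,
      forall_const]
    exact forall_comm

theorem earliest_completion_eq_sup' {n : ℕ} (hn : 0 < n) (R p C : Fin n → ℝ)
    (h0 : C ⟨0, hn⟩ = R ⟨0, hn⟩ + p ⟨0, hn⟩)
    (hsucc : ∀ (j : Fin n) (h : (j : ℕ) + 1 < n),
      C ⟨(j : ℕ) + 1, h⟩ = max (R ⟨(j : ℕ) + 1, h⟩) (C j) + p ⟨(j : ℕ) + 1, h⟩)
    (m : Fin n) :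
    C m = (Iic m).sup' nonempty_Iic fun u => R u + ∑ k ∈ Icc u m, p k := by
  obtain ⟨m, hm⟩ := m
  induction m with
  | zero =>
    have : Iic (⟨0, hm⟩ : Fin n) = {⟨0, hm⟩} := by
      ext k; simp [Fin.le_def, Fin.ext_iff]
    simp [this, h0]
  | succ m ih =>
    have hm' : m < n := by omega
    calc C ⟨m + 1, hm⟩
        = (R ⟨m + 1, hm⟩ + p ⟨m + 1, hm⟩) ⊔ (C ⟨m, hm'⟩ + p ⟨m + 1, hm⟩) := by
          rw [hsucc ⟨m, hm'⟩ hm, max_add_add_right]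
      _ = _ := by
          rw [sup'_congr _ (Fin.Iic_mk_succ hm) fun _ _ => rfl, sup'_insert, Icc_self,
            sum_singleton, ih hm', sup'_add]
          congr 1
          refine sup'_congr _ rfl fun u hu => ?_
          rw [Fin.Icc_mk_succ_right hm (mem_Iic.mp hu), sum_insert (by simp [Fin.le_def]),
            add_comm (p _), add_assoc]

/-- For a permutation schedule of jobs `J_1, …, J_n` (in this order)
on a three-machine flow shop, with all operations started as early as possible,
the makespan equals
`max_{u ≤ v} ( ∑_{j ≤ u} p₁ j + ∑_{u ≤ j ≤ v} p₂ j + ∑_{j ≥ v} p₃ j )`. -/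
theorem three_machine_permutation_makespan
    (n : ℕ) (hn : 0 < n) (p1 p2 p3 : Fin n → ℝ)
    (C1 C2 C3 : Fin n → ℝ)
    -- machine 1 processes the jobs back to back starting at time 0
    (hC1 : ∀ j : Fin n, C1 j = ∑ k ∈ Finset.univ.filter (fun k => k ≤ j), p1 k)
    -- earliest-start recursion on machine 2
    (hC2zero : C2 ⟨0, hn⟩ = C1 ⟨0, hn⟩ + p2 ⟨0, hn⟩)
    (hC2succ : ∀ (j : Fin n) (h : (j : ℕ) + 1 < n),
      C2 ⟨(j : ℕ) + 1, h⟩ = max (C1 ⟨(j : ℕ) + 1, h⟩) (C2 j) + p2 ⟨(j : ℕ) + 1, h⟩)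
    -- earliest-start recursion on machine 3
    (hC3zero : C3 ⟨0, hn⟩ = C2 ⟨0, hn⟩ + p3 ⟨0, hn⟩)
    (hC3succ : ∀ (j : Fin n) (h : (j : ℕ) + 1 < n),
      C3 ⟨(j : ℕ) + 1, h⟩ = max (C2 ⟨(j : ℕ) + 1, h⟩) (C3 j) + p3 ⟨(j : ℕ) + 1, h⟩) :
    C3 ⟨n - 1, Nat.sub_lt hn Nat.one_pos⟩ =
      (Finset.univ.filter (fun uv : Fin n × Fin n => uv.1 ≤ uv.2)).sup'
        ⟨(⟨0, hn⟩, ⟨0, hn⟩), by simp⟩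
        (fun uv =>
          (∑ j ∈ Finset.univ.filter (fun j => j ≤ uv.1), p1 j) +
          (∑ j ∈ Finset.univ.filter (fun j => uv.1 ≤ j ∧ j ≤ uv.2), p2 j) +
          (∑ j ∈ Finset.univ.filter (fun j => uv.2 ≤ j), p3 j)) := by
  have : Nonempty (Fin n) := ⟨⟨0, hn⟩⟩
  set last : Fin n := ⟨n - 1, Nat.sub_lt hn Nat.one_pos⟩
  have h_Iic_last : Iic last = univ := by
    ext k; simp only [mem_Iic, mem_univ, iff_true, Fin.le_def, last]; omega
  have h_Icc_last (v : Fin n) : Icc v last = Ici v := by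
    ext k; simp only [mem_Icc, mem_Ici, Fin.le_def, last, and_iff_left_iff_imp]; omega
  refine .trans ?_ (sup'_filter_le_eq_sup'_sup'_Iic _ _).symm
  rw [earliest_completion_eq_sup' hn C2 p3 C3 hC3zero hC3succ,
    sup'_congr _ h_Iic_last fun _ _ => rfl]
  refine sup'_congr _ rfl fun v _ => ?_
  rw [earliest_completion_eq_sup' hn C1 p2 C2 hC2zero hC2succ, sup'_add, h_Icc_last]
  simp only [hC1, filter_ge_eq_Iic, filter_le_le_eq_Icc, filter_le_eq_Ici]
end

section
/- Johnson's rule produces an optimal schedule for the two-machine flow shop makespan problem: the permutation that first orders jobs with p_{1j} ≤ p_{2j} by nondecreasing p_{1j} and then the remaining jobs by nonincreasing p_{2j} achieves makespan equal to the minimum makespan over all feasible schedules. -/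
/-!
Let a feasible schedule list its jobs in the order in which they start on machine 2. For every
position `ν` of that order, the jobs up to `ν` are processed on machine 1 before job `ν` starts on
machine 2, and the jobs from `ν` on are processed on machine 2 after that moment; since the
processing intervals on a machine are disjoint, the makespan is at least the length `pathLength`
of this chain. The longest chain, `permMakespan`, is attained by the schedule that runs machine 1
without idling and machine 2 without idling after a suitable initial delay. Johnson's order
minimizes `permMakespan`: swapping adjacent jobs `a`, `b` with
`min (p1 a) (p2 b) ≤ min (p1 b) (p2 a)` into the order `a, b` never increases it, and selection
sort by such swaps turns any order into Johnson's.
-/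

open Finset Function

open MeasureTheory in
theorem sum_le_sub_of_pairwiseDisjoint_Ico {ι : Type*} {F : Finset ι} {s ℓ : ι → ℝ} {a b : ℝ}
    (hab : a ≤ b) (hℓ : ∀ i ∈ F, 0 ≤ ℓ i) (hs : ∀ i ∈ F, a ≤ s i)
    (he : ∀ i ∈ F, s i + ℓ i ≤ b)
    (hd : (F : Set ι).PairwiseDisjoint fun i => Set.Ico (s i) (s i + ℓ i)) :
    ∑ i ∈ F, ℓ i ≤ b - a := by
  have hsub : ⋃ i ∈ F, Set.Ico (s i) (s i + ℓ i) ⊆ Set.Icc a b := Set.iUnion₂_subset fun i hi =>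
    Set.Ico_subset_Icc_self.trans (Set.Icc_subset_Icc (hs i hi) (he i hi))
  calc ∑ i ∈ F, ℓ i = volume.real (⋃ i ∈ F, Set.Ico (s i) (s i + ℓ i)) := by
        rw [measureReal_biUnion_finset hd (fun _ _ => measurableSet_Ico)
          fun _ _ => measure_Ico_lt_top.ne]
        refine sum_congr rfl fun i hi => ?_
        rw [Real.volume_real_Ico_of_le (le_add_of_nonneg_right (hℓ i hi)), add_sub_cancel_left]
    _ ≤ volume.real (Set.Icc a b) := measureReal_mono hsub measure_Icc_lt_top.ne
    _ = b - a := Real.volume_real_Icc_of_le hab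

theorem sum_Iio_add_sum_Ici {α M : Type*} [LinearOrder α] [Fintype α] [LocallyFiniteOrderBot α]
    [LocallyFiniteOrderTop α] [AddCommMonoid M] (f : α → M) (a : α) :
    ∑ i ∈ Iio a, f i + ∑ i ∈ Ici a, f i = ∑ i, f i := by
  rw [← filter_gt_eq_Iio, ← filter_le_eq_Ici]
  simpa only [not_lt] using sum_filter_add_sum_filter_not univ (· < a) f

theorem pairwise_disjoint_Ico_of_nonoverlap {ι : Type*} {S p : ι → ℝ}
    (h : ∀ j k, j ≠ k → S j + p j ≤ S k ∨ S k + p k ≤ S j) :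
    Pairwise (Disjoint on fun j => Set.Ico (S j) (S j + p j)) := fun j k hjk => by
  rw [onFun, Set.Ico_disjoint_Ico]
  rcases h j k hjk with h | h
  · exact (min_le_left _ _).trans (h.trans (le_max_right _ _))
  · exact (min_le_right _ _).trans (h.trans (le_max_left _ _))

namespace FlowShop

variable {ι : Type*} {p1 p2 : ι → ℝ} {m : ℕ}

variable (p1 p2) in
structure IsFeasible (S1 S2 : ι → ℝ) : Prop where
  nonneg : ∀ j, 0 ≤ S1 j
  precedence : ∀ j, S1 j + p1 j ≤ S2 j
  machine1 : ∀ j k, j ≠ k → S1 j + p1 j ≤ S1 k ∨ S1 k + p1 k ≤ S1 j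
  machine2 : ∀ j k, j ≠ k → S2 j + p2 j ≤ S2 k ∨ S2 k + p2 k ≤ S2 j

variable (p2) in
def makespan [Fintype ι] [Nonempty ι] (S2 : ι → ℝ) : ℝ :=
  univ.sup' univ_nonempty fun j => S2 j + p2 j

variable (p1 p2) in
/-- Length of the chain running `π 0, …, π ν` on machine 1 and then `π ν, …` on machine 2. -/
def pathLength (π : Fin m → ι) (ν : Fin m) : ℝ :=
  (∑ k ∈ univ.filter (fun k => k ≤ ν), p1 (π k)) +
    (∑ k ∈ univ.filter (fun k => ν ≤ k), p2 (π k))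

variable (p1 p2) in
def permMakespan [NeZero m] (π : Fin m → ι) : ℝ :=
  univ.sup' univ_nonempty (pathLength p1 p2 π)

theorem IsFeasible.pairwise_disjoint_machine1 {S1 S2 : ι → ℝ} (hS : IsFeasible p1 p2 S1 S2) :
    Pairwise (Disjoint on fun j => Set.Ico (S1 j) (S1 j + p1 j)) :=
  pairwise_disjoint_Ico_of_nonoverlap hS.machine1

theorem IsFeasible.pairwise_disjoint_machine2 {S1 S2 : ι → ℝ} (hS : IsFeasible p1 p2 S1 S2) :
    Pairwise (Disjoint on fun j => Set.Ico (S2 j) (S2 j + p2 j)) :=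
  pairwise_disjoint_Ico_of_nonoverlap hS.machine2

theorem pathLength_eq (π : Fin m → ι) (ν : Fin m) :
    pathLength p1 p2 π ν = ∑ k ∈ Iic ν, p1 (π k) + ∑ k ∈ Ici ν, p2 (π k) := by
  rw [pathLength, filter_ge_eq_Iic, filter_le_eq_Ici]

theorem pathLength_le_makespan [Fintype ι] [Nonempty ι] (hp1 : ∀ j, 0 ≤ p1 j)
    (hp2 : ∀ j, 0 ≤ p2 j) {S1 S2 : ι → ℝ} (hS : IsFeasible p1 p2 S1 S2) {τ : Fin m ≃ ι}
    (hτ : Monotone (S2 ∘ τ)) (ν : Fin m) : pathLength p1 p2 τ ν ≤ makespan p2 S2 := by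
  have hC : ∀ j, S2 j + p2 j ≤ makespan p2 S2 := fun j =>
    le_sup' (fun j => S2 j + p2 j) (mem_univ j)
  have hS2 : 0 ≤ S2 (τ ν) := (add_nonneg (hS.nonneg _) (hp1 _)).trans (hS.precedence _)
  have hmachine1 : ∑ k ∈ Iic ν, p1 (τ k) ≤ S2 (τ ν) - 0 :=
    sum_le_sub_of_pairwiseDisjoint_Ico hS2 (fun _ _ => hp1 _) (fun _ _ => hS.nonneg _)
      (fun _ hk => (hS.precedence _).trans (hτ (mem_Iic.1 hk)))
      ((hS.pairwise_disjoint_machine1.comp_of_injective τ.injective).set_pairwise _)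
  have hmachine2 : ∑ k ∈ Ici ν, p2 (τ k) ≤ makespan p2 S2 - S2 (τ ν) :=
    sum_le_sub_of_pairwiseDisjoint_Ico ((le_add_of_nonneg_right (hp2 _)).trans (hC _))
      (fun _ _ => hp2 _) (fun _ hk => hτ (mem_Ici.1 hk)) (fun _ _ => hC _)
      ((hS.pairwise_disjoint_machine2.comp_of_injective τ.injective).set_pairwise _)
  rw [pathLength_eq]
  linarith

theorem permMakespan_le_makespan [Fintype ι] [Nonempty ι] [NeZero m] (hp1 : ∀ j, 0 ≤ p1 j)
    (hp2 : ∀ j, 0 ≤ p2 j) {S1 S2 : ι → ℝ} (hS : IsFeasible p1 p2 S1 S2) {τ : Fin m ≃ ι}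
    (hτ : Monotone (S2 ∘ τ)) : permMakespan p1 p2 τ ≤ makespan p2 S2 :=
  sup'_le _ _ fun ν _ => pathLength_le_makespan hp1 hp2 hS hτ ν

def sequentialStart (π : Fin m ≃ ι) (p : ι → ℝ) (j : ι) : ℝ :=
  ∑ i ∈ Iio (π.symm j), p (π i)

theorem sequentialStart_nonneg (π : Fin m ≃ ι) {p : ι → ℝ} (hp : ∀ j, 0 ≤ p j) (j : ι) :
    0 ≤ sequentialStart π p j :=
  sum_nonneg fun i _ => hp (π i)

theorem sequentialStart_add_eq (π : Fin m ≃ ι) (p : ι → ℝ) (j : ι) :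
    sequentialStart π p j + p j = ∑ i ∈ Iic (π.symm j), p (π i) := by
  rw [sequentialStart, ← sum_Iio_add_eq_sum_Iic, Equiv.apply_symm_apply]

theorem sequentialStart_add_le_of_lt (π : Fin m ≃ ι) {p : ι → ℝ} (hp : ∀ j, 0 ≤ p j)
    {j k : ι} (hjk : π.symm j < π.symm k) :
    sequentialStart π p j + p j ≤ sequentialStart π p k := by
  rw [sequentialStart_add_eq]
  exact sum_le_sum_of_subset_of_nonneg (fun i hi => mem_Iio.2 ((mem_Iic.1 hi).trans_lt hjk))
    fun i _ _ => hp (π i)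

theorem sequentialStart_nonoverlap (π : Fin m ≃ ι) {p : ι → ℝ} (hp : ∀ j, 0 ≤ p j) {j k : ι}
    (hjk : j ≠ k) :
    sequentialStart π p j + p j ≤ sequentialStart π p k ∨
      sequentialStart π p k + p k ≤ sequentialStart π p j :=
  (lt_or_gt_of_ne (π.symm.injective.ne hjk)).imp (sequentialStart_add_le_of_lt π hp)
    (sequentialStart_add_le_of_lt π hp)

theorem exists_isFeasible_makespan_le [Fintype ι] [Nonempty ι] [NeZero m]
    (hp1 : ∀ j, 0 ≤ p1 j) (hp2 : ∀ j, 0 ≤ p2 j) (π : Fin m ≃ ι) :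
    ∃ S1 S2 : ι → ℝ, IsFeasible p1 p2 S1 S2 ∧ makespan p2 S2 ≤ permMakespan p1 p2 π := by
  -- machine 2 waits `D`, chosen so that it then finishes exactly at `permMakespan`
  set D := permMakespan p1 p2 π - ∑ i, p2 (π i) with hD
  have hpath : ∀ j, ∑ i ∈ Iic (π.symm j), p1 (π i) + ∑ i ∈ Ici (π.symm j), p2 (π i)
      ≤ permMakespan p1 p2 π := fun j =>
    pathLength_eq _ _ ▸ le_sup' (pathLength p1 p2 π) (mem_univ (π.symm j))
  refine ⟨sequentialStart π p1, fun j => D + sequentialStart π p2 j,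
    ⟨sequentialStart_nonneg π hp1, fun j => ?_, fun j k hjk => sequentialStart_nonoverlap π hp1 hjk,
      fun j k hjk => (sequentialStart_nonoverlap π hp2 hjk).imp (fun h => ?_) (fun h => ?_)⟩, ?_⟩
  · have := sum_Iio_add_sum_Ici (fun i => p2 (π i)) (π.symm j)
    rw [sequentialStart_add_eq, sequentialStart]
    linarith [hpath j]
  · linarith
  · linarith
  · refine sup'_le _ _ fun j _ => ?_
    show D + sequentialStart π p2 j + p2 j ≤ _
    rw [add_assoc, sequentialStart_add_eq, hD]
    linarith [sum_le_univ_sum_of_nonneg (s := Iic (π.symm j)) fun i => hp2 (π i)]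

variable (p1 p2) in
def JohnsonLE (a b : ι) : Prop := min (p1 a) (p2 b) ≤ min (p1 b) (p2 a)

theorem johnsonLE_of_johnson_rule {a b : ι} (hfirst : p2 a < p1 a → p2 b < p1 b)
    (hsort1 : p1 a ≤ p2 a → p1 b ≤ p2 b → p1 a ≤ p1 b)
    (hsort2 : p2 a < p1 a → p2 b < p1 b → p2 b ≤ p2 a) : JohnsonLE p1 p2 a b := by
  unfold JohnsonLE
  rcases le_or_gt (p1 a) (p2 a) with ha | ha
  · rcases le_or_gt (p1 b) (p2 b) with hb | hb
    · exact le_min ((min_le_left _ _).trans (hsort1 ha hb)) ((min_le_left _ _).trans ha)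
    · exact le_min ((min_le_right _ _).trans hb.le) ((min_le_left _ _).trans ha)
  · have hb := hfirst ha
    exact le_min ((min_le_right _ _).trans hb.le) ((min_le_right _ _).trans (hsort2 ha hb))

variable (p1 p2) in
def listMakespan : List ι → ℝ
  | [] => 0
  | j :: L => p1 j + max (p2 j + (L.map p2).sum) (listMakespan L)

theorem listMakespan_cons_le_cons (j : ι) {L L' : List ι} (hL : L.Perm L')
    (h : listMakespan p1 p2 L ≤ listMakespan p1 p2 L') :
    listMakespan p1 p2 (j :: L) ≤ listMakespan p1 p2 (j :: L') := by
  simp only [listMakespan, (hL.map p2).sum_eq]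
  gcongr

theorem listMakespan_swap_le {x y : ι} (h : JohnsonLE p1 p2 x y) (L : List ι) :
    listMakespan p1 p2 (x :: y :: L) ≤ listMakespan p1 p2 (y :: x :: L) := by
  -- Up to the common term `p1 x + p1 y + listMakespan L`, this is
  -- `p1 x + p2 y + max (p2 x) (p1 y) ≤ p1 y + p2 x + max (p2 y) (p1 x)`.
  obtain ⟨h1, h2⟩ := le_min_iff.mp h
  simp only [listMakespan, List.map_cons, List.sum_cons]
  rcases min_le_iff.mp h1 with h1 | h1 <;> rcases min_le_iff.mp h2 with h2 | h2 <;> grind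

theorem listMakespan_cons_append_le {j : ι} :
    ∀ {A : List ι} (B : List ι), (∀ a ∈ A, JohnsonLE p1 p2 j a) →
      listMakespan p1 p2 (j :: (A ++ B)) ≤ listMakespan p1 p2 (A ++ j :: B)
  | [], _, _ => le_rfl
  | a :: A, B, hA => by
    rw [List.forall_mem_cons] at hA
    calc listMakespan p1 p2 (j :: a :: (A ++ B))
        ≤ listMakespan p1 p2 (a :: j :: (A ++ B)) := listMakespan_swap_le hA.1 _
      _ ≤ listMakespan p1 p2 (a :: (A ++ j :: B)) :=
        listMakespan_cons_le_cons a List.perm_middle.symm (listMakespan_cons_append_le B hA.2)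

theorem listMakespan_le_of_perm :
    ∀ {J L : List ι}, J.Pairwise (JohnsonLE p1 p2) → L.Perm J →
      listMakespan p1 p2 J ≤ listMakespan p1 p2 L
  | [], _, _, hL => by rw [List.perm_nil.mp hL]
  | j :: J, L, hJ, hL => by
    obtain ⟨A, B, rfl⟩ := List.append_of_mem (hL.mem_iff.mpr List.mem_cons_self)
    have hAB : (A ++ B).Perm J := (List.perm_cons j).mp (List.perm_middle.symm.trans hL)
    rw [List.pairwise_cons] at hJ
    calc listMakespan p1 p2 (j :: J)
        ≤ listMakespan p1 p2 (j :: (A ++ B)) :=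
          listMakespan_cons_le_cons j hAB.symm (listMakespan_le_of_perm hJ.2 hAB)
      _ ≤ listMakespan p1 p2 (A ++ j :: B) := listMakespan_cons_append_le B fun a ha =>
          hJ.1 a (hAB.subset (List.mem_append_left B ha))

theorem pathLength_zero (π : Fin (m + 1) → ι) :
    pathLength p1 p2 π 0 = p1 (π 0) + (p2 (π 0) + ∑ i : Fin m, p2 (π i.succ)) := by
  simp [pathLength, sum_filter, Fin.sum_univ_succ]

theorem pathLength_succ (π : Fin (m + 1) → ι) (ν : Fin m) :
    pathLength p1 p2 π ν.succ = p1 (π 0) + pathLength p1 p2 (fun i => π i.succ) ν := by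
  simp [pathLength, sum_filter, Fin.sum_univ_succ, Fin.succ_ne_zero, add_assoc]

theorem permMakespan_succ_succ (π : Fin (m + 2) → ι) :
    permMakespan p1 p2 π = p1 (π 0) + max (p2 (π 0) + ∑ i : Fin (m + 1), p2 (π i.succ))
      (permMakespan p1 p2 fun i => π i.succ) := by
  rw [permMakespan, sup'_congr (H := univ_nonempty) (Fin.univ_succ _) fun _ _ => rfl,
    sup'_cons (H := univ_nonempty.map), sup'_map]
  simp only [comp_def, Embedding.coeFn_mk, pathLength_zero, pathLength_succ]
  rw [← add_sup', max_add_add_left]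
  rfl

theorem permMakespan_eq_listMakespan (hp2 : ∀ j, 0 ≤ p2 j) :
    ∀ {m : ℕ} (π : Fin (m + 1) → ι), permMakespan p1 p2 π = listMakespan p1 p2 (List.ofFn π)
  | 0, π => by simp [permMakespan, pathLength_zero, listMakespan, hp2]
  | m + 1, π => by
    rw [permMakespan_succ_succ, List.ofFn_succ, listMakespan, ← permMakespan_eq_listMakespan hp2,
      List.map_ofFn, List.sum_ofFn]
    rfl

theorem permMakespan_le_of_johnsonLE [NeZero m] (hp2 : ∀ j, 0 ≤ p2 j) {σ : Fin m ≃ ι}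
    (hσ : ∀ k l, k < l → JohnsonLE p1 p2 (σ k) (σ l)) (τ : Fin m ≃ ι) :
    permMakespan p1 p2 σ ≤ permMakespan p1 p2 τ := by
  obtain ⟨k, rfl⟩ := Nat.exists_eq_succ_of_ne_zero (NeZero.ne m)
  rw [permMakespan_eq_listMakespan hp2, permMakespan_eq_listMakespan hp2]
  refine listMakespan_le_of_perm (List.pairwise_ofFn.mpr hσ) ?_
  simpa [comp_def] using Equiv.Perm.ofFn_comp_perm (τ.trans σ.symm) σ

end FlowShop

open FlowShop

/-- Johnson's rule is optimal for the two-machine flow shop makespan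
problem.  The permutation `σ` (where `σ k` is the job in position `k`) first
schedules the jobs with `p₁ ≤ p₂` in nondecreasing order of `p₁` and then the
remaining jobs in nonincreasing order of `p₂`; the resulting permutation schedule
achieves a makespan equal to the minimum over all feasible schedules. -/
theorem johnson_rule_optimal
    (n : ℕ) (hn : 0 < n) (p1 p2 : Fin n → ℝ)
    (hp1 : ∀ j, 0 ≤ p1 j) (hp2 : ∀ j, 0 ≤ p2 j)
    (σ : Equiv.Perm (Fin n))
    -- jobs with `p₁ ≤ p₂` are scheduled before the jobs with `p₁ > p₂`
    (hfirst : ∀ k l : Fin n, k < l → p2 (σ k) < p1 (σ k) → p2 (σ l) < p1 (σ l))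
    -- the jobs with `p₁ ≤ p₂` appear in nondecreasing order of `p₁`
    (hsort1 : ∀ k l : Fin n, k < l → p1 (σ k) ≤ p2 (σ k) → p1 (σ l) ≤ p2 (σ l) →
      p1 (σ k) ≤ p1 (σ l))
    -- the jobs with `p₁ > p₂` appear in nonincreasing order of `p₂`
    (hsort2 : ∀ k l : Fin n, k < l → p2 (σ k) < p1 (σ k) → p2 (σ l) < p1 (σ l) →
      p2 (σ l) ≤ p2 (σ k)) :
    -- makespan of the Johnson permutation schedule (earliest-start closed form)
    let JM := Finset.univ.sup' ⟨⟨0, hn⟩, Finset.mem_univ _⟩ (fun ν : Fin n =>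
      (∑ k ∈ Finset.univ.filter (fun k => k ≤ ν), p1 (σ k)) +
      (∑ k ∈ Finset.univ.filter (fun k => ν ≤ k), p2 (σ k)))
    -- feasibility of a schedule with start times `S1`, `S2` on machines 1, 2
    let Feas : (Fin n → ℝ) → (Fin n → ℝ) → Prop := fun S1 S2 =>
      (∀ j, 0 ≤ S1 j) ∧ (∀ j, S1 j + p1 j ≤ S2 j) ∧
      (∀ j k, j ≠ k → S1 j + p1 j ≤ S1 k ∨ S1 k + p1 k ≤ S1 j) ∧
      (∀ j k, j ≠ k → S2 j + p2 j ≤ S2 k ∨ S2 k + p2 k ≤ S2 j)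
    -- the Johnson makespan is attained by a feasible schedule, and no feasible
    -- schedule has a smaller makespan
    (∃ S1 S2, Feas S1 S2 ∧
        Finset.univ.sup' ⟨⟨0, hn⟩, Finset.mem_univ _⟩ (fun j => S2 j + p2 j) = JM) ∧
    (∀ S1 S2, Feas S1 S2 →
        JM ≤ Finset.univ.sup' ⟨⟨0, hn⟩, Finset.mem_univ _⟩ (fun j => S2 j + p2 j)) := by
  intro JM Feas
  have : NeZero n := ⟨hn.ne'⟩
  have hσ : ∀ k l, k < l → JohnsonLE p1 p2 (σ k) (σ l) := fun k l hkl =>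
    johnsonLE_of_johnson_rule (hfirst k l hkl) (hsort1 k l hkl) (hsort2 k l hkl)
  have hlower : ∀ S1 S2, IsFeasible p1 p2 S1 S2 → permMakespan p1 p2 σ ≤ makespan p2 S2 :=
    fun S1 S2 hS => (permMakespan_le_of_johnsonLE hp2 hσ (Tuple.sort S2)).trans
      (permMakespan_le_makespan hp1 hp2 hS (Tuple.monotone_sort S2))
  obtain ⟨S1, S2, hS, hle⟩ := exists_isFeasible_makespan_le hp1 hp2 σ
  exact ⟨⟨S1, S2, ⟨hS.1, hS.2, hS.3, hS.4⟩, le_antisymm hle (hlower S1 S2 hS)⟩,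
    fun S1 S2 ⟨h0, h12, h1, h2⟩ => hlower S1 S2 ⟨h0, h12, h1, h2⟩⟩
end

section
/- In the optimal two-machine flow shop schedule produced by Johnson's rule, if the critical job J_ν satisfies p_{1ν} ≥ p_{2ν}, then C_max ≤ sum_{j∈J} p_{1j} + (1/2)(p_{1ν} + p_{2ν}). -/
/-!
Every job after the critical job `ν` has `p₂ ≤ p₁`, so trading the second-machine times on
the critical path after `ν` for first-machine times gives `C_max ≤ ∑ p₁ + p₂ ν`, and
`p₂ ν ≤ (p₁ ν + p₂ ν) / 2` because `p₂ ν ≤ p₁ ν`.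
-/

open Finset

section LinearOrder

variable {α M : Type*} [LinearOrder α] [Fintype α] [AddCommMonoid M]

theorem sum_filter_le_add_sum_filter_lt (f : α → M) (a : α) :
    ∑ j ∈ univ.filter (· ≤ a), f j + ∑ j ∈ univ.filter (a < ·), f j = ∑ j, f j := by
  simp_rw [← not_le]
  exact sum_filter_add_sum_filter_not univ (· ≤ a) f

theorem sum_filter_ge_eq_add_sum_filter_gt (f : α → M) (a : α) :
    ∑ j ∈ univ.filter (a ≤ ·), f j = f a + ∑ j ∈ univ.filter (a < ·), f j := by
  have hsplit : univ.filter (a ≤ ·) = insert a (univ.filter (a < ·)) := by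
    ext j
    simp [le_iff_lt_or_eq, eq_comm, or_comm]
  rw [hsplit, sum_insert (by simp)]

variable [PartialOrder M] [IsOrderedAddMonoid M]

theorem sum_filter_gt_le_of_johnson_order {p1 p2 : α → M}
    (hJ : ∀ k l, k < l → p2 k ≤ p1 k → p2 l ≤ p1 l) {ν : α} (hν : p2 ν ≤ p1 ν) :
    ∑ j ∈ univ.filter (ν < ·), p2 j ≤ ∑ j ∈ univ.filter (ν < ·), p1 j :=
  sum_le_sum fun j hj => hJ ν j (mem_filter.1 hj).2 hν

theorem critical_path_le_sum_add_of_johnson_order {p1 p2 : α → M}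
    (hJ : ∀ k l, k < l → p2 k ≤ p1 k → p2 l ≤ p1 l) {ν : α} (hν : p2 ν ≤ p1 ν) :
    ∑ j ∈ univ.filter (· ≤ ν), p1 j + ∑ j ∈ univ.filter (ν ≤ ·), p2 j ≤
      ∑ j, p1 j + p2 ν :=
  calc ∑ j ∈ univ.filter (· ≤ ν), p1 j + ∑ j ∈ univ.filter (ν ≤ ·), p2 j
      = ∑ j ∈ univ.filter (· ≤ ν), p1 j + ∑ j ∈ univ.filter (ν < ·), p2 j + p2 ν := by
        rw [sum_filter_ge_eq_add_sum_filter_gt, add_left_comm, add_comm]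
    _ ≤ ∑ j ∈ univ.filter (· ≤ ν), p1 j + ∑ j ∈ univ.filter (ν < ·), p1 j + p2 ν := by
        gcongr _ + ?_ + _
        exact sum_filter_gt_le_of_johnson_order hJ hν
    _ = ∑ j, p1 j + p2 ν := by rw [sum_filter_le_add_sum_filter_lt]

end LinearOrder

theorem johnson_critical_job_bound_general
    (n : ℕ) (p1 p2 : Fin n → ℝ)
    -- Johnson order: every job scheduled after a job with `p₁ ≥ p₂` also
    -- satisfies `p₁ ≥ p₂`
    (hJ : ∀ k l : Fin n, k < l → p2 k ≤ p1 k → p2 l ≤ p1 l)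
    (ν : Fin n) (Cmax : ℝ)
    -- `ν` is the critical job of the Johnson schedule
    (hC : Cmax = (∑ j ∈ Finset.univ.filter (fun j => j ≤ ν), p1 j) +
                 (∑ j ∈ Finset.univ.filter (fun j => ν ≤ j), p2 j))
    (hν : p2 ν ≤ p1 ν) :
    Cmax ≤ (∑ j, p1 j) + (p1 ν + p2 ν) / 2 := by
  have hpath := critical_path_le_sum_add_of_johnson_order hJ hν
  rw [hC]
  linarith

/-- In the two-machine Johnson schedule (jobs indexed in schedule
order), if the critical job `ν` satisfies `p₁ ν ≥ p₂ ν`, then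
`Cmax ≤ ∑ j, p₁ j + (p₁ ν + p₂ ν) / 2`. -/
theorem johnson_critical_job_bound
    (n : ℕ) (p1 p2 : Fin n → ℝ)
    (hp1 : ∀ j, 0 ≤ p1 j) (hp2 : ∀ j, 0 ≤ p2 j)
    -- Johnson order: every job scheduled after a job with `p₁ ≥ p₂` also
    -- satisfies `p₁ ≥ p₂`
    (hJ : ∀ k l : Fin n, k < l → p2 k ≤ p1 k → p2 l ≤ p1 l)
    (ν : Fin n) (Cmax : ℝ)
    -- `ν` is the critical job of the Johnson schedule
    (hC : Cmax = (∑ j ∈ Finset.univ.filter (fun j => j ≤ ν), p1 j) +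
                 (∑ j ∈ Finset.univ.filter (fun j => ν ≤ j), p2 j))
    (hν : p2 ν ≤ p1 ν) :
    Cmax ≤ (∑ j, p1 j) + (p1 ν + p2 ν) / 2 :=
  johnson_critical_job_bound_general n p1 p2 hJ ν Cmax hC hν
end

section
/- The reduction from PARTITION is correct: given positive integers s(a_1),...,s(a_n) with total sum 2C, construct the directed graph on vertices v_0,...,v_n where each consecutive pair (v_{k-1}, v_k) is joined by two parallel arcs whose jobs have two-machine processing times (s(a_k), 0) and (0, s(a_k)) respectively. Then there exists a v_0–v_n path whose jobs admit a two-machine flow shop schedule with makespan at most C if and only if there is a subset T ⊆ {1,...,n} with sum_{k∈T} s(a_k) = C. -/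
/-! STATEMENT 8: Correctness of the reduction from PARTITION to
`F2|shortest path|C_max`. -/

namespace PartitionReduction

/-- `chainFrom u P v`: the list of arcs `P` forms a directed walk from `u` to `v`. -/
def chainFrom {β : Type} : ℕ → List (ℕ × ℕ × β) → ℕ → Prop
  | u, [], v => u = v
  | u, a :: r, v => a.1 = u ∧ chainFrom a.2.1 r v

/-- The jobs in the list `jobs` (with processing times on machines 1 and 2)
admit a feasible two-machine flow shop schedule with makespan at most `C`. -/
def schedulable2 (jobs : List (ℕ × ℕ)) (C : ℕ) : Prop :=
  ∃ S1 S2 : Fin jobs.length → ℝ,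
    (∀ j, 0 ≤ S1 j) ∧
    (∀ j, S1 j + ((jobs.get j).1 : ℝ) ≤ S2 j) ∧
    (∀ j k, j ≠ k →
      S1 j + ((jobs.get j).1 : ℝ) ≤ S1 k ∨ S1 k + ((jobs.get k).1 : ℝ) ≤ S1 j) ∧
    (∀ j k, j ≠ k →
      S2 j + ((jobs.get j).2 : ℝ) ≤ S2 k ∨ S2 k + ((jobs.get k).2 : ℝ) ≤ S2 j) ∧
    (∀ j, S2 j + ((jobs.get j).2 : ℝ) ≤ (C : ℝ))

/-- The arcs of the reduction graph on vertices `0, …, n`: each consecutive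
pair `(k, k+1)` is joined by two parallel arcs, carrying the jobs
`(s k, 0)` and `(0, s k)` respectively. -/
def reductionArcs (n : ℕ) (s : Fin n → ℕ) : List (ℕ × ℕ × ℕ × ℕ) :=
  (List.finRange n).flatMap fun (k : Fin n) =>
    [((k : ℕ), (k : ℕ) + 1, s k, 0), ((k : ℕ), (k : ℕ) + 1, 0, s k)]

/-!
A `0`–`n` walk in the reduction graph takes one of the two parallel arcs for every `k`, so it is
determined by the set `T` of indices at which it takes the machine-1 arc; its jobs then load
machine 1 with `∑ k ∈ T, s k` and machine 2 with `∑ k ∉ T, s k`. In any feasible schedule the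
operations of one machine are disjoint intervals of `[0, C]`, so each load is at most `C`
(compare Lebesgue measures); conversely, as every job needs only one machine, running each
machine's operations back to back meets makespan `C` when both loads are at most `C`. The loads
add up to `2C`, so both are at most `C` exactly when `∑ k ∈ T, s k = C`.
-/

open MeasureTheory Finset

section Machine

variable {ι : Type*}

def NonOverlapping (S q : ι → ℝ) : Prop :=
  ∀ j k, j ≠ k → S j + q j ≤ S k ∨ S k + q k ≤ S j

theorem NonOverlapping.sum_le [Fintype ι] {S q : ι → ℝ} (h : NonOverlapping S q)
    (hq : ∀ j, 0 ≤ q j) {a b : ℝ} (hab : a ≤ b) (ha : ∀ j, a ≤ S j)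
    (hb : ∀ j, S j + q j ≤ b) : ∑ j, q j ≤ b - a := by
  have hdisj : Pairwise fun j k =>
      Disjoint (Set.Ico (S j) (S j + q j)) (Set.Ico (S k) (S k + q k)) := by
    intro j k hjk
    rw [Set.Ico_disjoint_Ico]
    rcases h j k hjk with h | h
    · exact (min_le_left _ _).trans (h.trans (le_max_right _ _))
    · exact (min_le_right _ _).trans (h.trans (le_max_left _ _))
  have hvol : volume (⋃ j, Set.Ico (S j) (S j + q j)) ≤ volume (Set.Ico a b) :=
    measure_mono (Set.iUnion_subset fun j => Set.Ico_subset_Ico (ha j) (hb j))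
  simp only [measure_iUnion hdisj (fun _ => measurableSet_Ico), tsum_fintype, Real.volume_Ico,
    add_sub_cancel_left] at hvol
  rwa [← ENNReal.ofReal_sum_of_nonneg (fun j _ => hq j),
    ENNReal.ofReal_le_ofReal_iff (sub_nonneg.2 hab)] at hvol

theorem NonOverlapping.ite {S q : ι → ℝ} (h : NonOverlapping S q) (Z : ι → Prop)
    [DecidablePred Z] (hZ : ∀ j, Z j → q j = 0) {x : ℝ}
    (hx : ∀ j, x ≤ S j ∨ S j + q j ≤ x) :
    NonOverlapping (fun j => if Z j then x else S j) q := by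
  intro j k hjk
  by_cases hj : Z j <;> by_cases hk : Z k <;> simp only [hj, hk, if_true, if_false]
  · simp [hZ j hj]
  · simpa [hZ j hj] using hx k
  · simpa [hZ k hk, or_comm] using hx j
  · exact h j k hjk

variable [Fintype ι] [LinearOrder ι]

def sequentialStart (q : ι → ℝ) (j : ι) : ℝ :=
  ∑ i ∈ univ.filter (· < j), q i

variable {q : ι → ℝ}

theorem sequentialStart_nonneg (hq : ∀ i, 0 ≤ q i) (j : ι) : 0 ≤ sequentialStart q j :=
  sum_nonneg fun i _ => hq i

theorem sequentialStart_add_self (q : ι → ℝ) (j : ι) :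
    sequentialStart q j + q j = ∑ i ∈ univ.filter (· ≤ j), q i := by
  have : univ.filter (· ≤ j) = insert j (univ.filter (· < j)) := by
    ext i; simp [le_iff_lt_or_eq, or_comm]
  rw [this, sum_insert (by simp), add_comm, sequentialStart]

theorem sequentialStart_add_le_of_lt (hq : ∀ i, 0 ≤ q i) {j k : ι} (hjk : j < k) :
    sequentialStart q j + q j ≤ sequentialStart q k := by
  rw [sequentialStart_add_self]
  exact sum_le_sum_of_subset_of_nonneg
    (monotone_filter_right _ fun i _ (hi : i ≤ j) => hi.trans_lt hjk) fun i _ _ => hq i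

theorem sequentialStart_add_le_sum (hq : ∀ i, 0 ≤ q i) (j : ι) :
    sequentialStart q j + q j ≤ ∑ i, q i := by
  rw [sequentialStart_add_self]
  exact sum_le_sum_of_subset_of_nonneg (filter_subset _ _) fun i _ _ => hq i

theorem nonOverlapping_sequentialStart (hq : ∀ i, 0 ≤ q i) :
    NonOverlapping (sequentialStart q) q := fun _ _ hjk =>
  (lt_or_gt_of_ne hjk).imp (sequentialStart_add_le_of_lt hq) (sequentialStart_add_le_of_lt hq)

end Machine

section Schedule

variable {jobs : List (ℕ × ℕ)} {C : ℕ}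

theorem schedulable2.sum_le (h : schedulable2 jobs C) :
    (jobs.map Prod.fst).sum ≤ C ∧ (jobs.map Prod.snd).sum ≤ C := by
  obtain ⟨S1, S2, hS1, hprec, h1, h2, hC⟩ := h
  have hS2 : ∀ j, 0 ≤ S2 j := fun j => (add_nonneg (hS1 j) (Nat.cast_nonneg _)).trans (hprec j)
  have load1 := NonOverlapping.sum_le h1 (fun _ => Nat.cast_nonneg _) (Nat.cast_nonneg C) hS1
    fun j => (hprec j).trans ((le_add_of_nonneg_right (Nat.cast_nonneg _)).trans (hC j))
  have load2 := NonOverlapping.sum_le h2 (fun _ => Nat.cast_nonneg _) (Nat.cast_nonneg C) hS2 hC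
  rw [← Fin.sum_univ_fun_getElem, ← Fin.sum_univ_fun_getElem]
  simp only [List.get_eq_getElem, sub_zero] at load1 load2
  exact ⟨by exact_mod_cast load1, by exact_mod_cast load2⟩

/-- Machine-1 operations run back to back from time 0 and machine-2 operations likewise; every
zero-length operation is parked at time 0 on machine 1 and at time `C` on machine 2, where it
clashes with nothing and cannot violate the precedence constraint. -/
theorem schedulable2_of_sum_le (hjobs : ∀ j ∈ jobs, j.1 = 0 ∨ j.2 = 0)
    (h1 : (jobs.map Prod.fst).sum ≤ C) (h2 : (jobs.map Prod.snd).sum ≤ C) :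
    schedulable2 jobs C := by
  set q1 : Fin jobs.length → ℝ := fun j => ((jobs.get j).1 : ℝ)
  set q2 : Fin jobs.length → ℝ := fun j => ((jobs.get j).2 : ℝ)
  have hq1 : ∀ j, 0 ≤ q1 j := fun _ => Nat.cast_nonneg _
  have hq2 : ∀ j, 0 ≤ q2 j := fun _ => Nat.cast_nonneg _
  have hq : ∀ j, q1 j = 0 ∨ q2 j = 0 := fun j => by
    simpa [q1, q2] using hjobs _ (List.get_mem jobs j)
  have load1 : ∑ j, q1 j ≤ C := by
    rw [← Fin.sum_univ_fun_getElem] at h1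
    simp only [q1, List.get_eq_getElem]
    exact_mod_cast h1
  have load2 : ∑ j, q2 j ≤ C := by
    rw [← Fin.sum_univ_fun_getElem] at h2
    simp only [q2, List.get_eq_getElem]
    exact_mod_cast h2
  have hC : (0 : ℝ) ≤ C := Nat.cast_nonneg C
  refine ⟨fun j => if q1 j = 0 then 0 else sequentialStart q1 j,
    fun j => if q2 j = 0 then C else sequentialStart q2 j, fun j => ?_, fun j => ?_,
    (nonOverlapping_sequentialStart hq1).ite _ (fun _ h => h)
      fun j => Or.inl (sequentialStart_nonneg hq1 j),
    (nonOverlapping_sequentialStart hq2).ite _ (fun _ h => h)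
      fun j => Or.inr ((sequentialStart_add_le_sum hq2 j).trans load2), fun j => ?_⟩
  · dsimp only
    split_ifs
    exacts [le_rfl, sequentialStart_nonneg hq1 j]
  · change (if q1 j = 0 then 0 else sequentialStart q1 j) + q1 j ≤
      if q2 j = 0 then (C : ℝ) else sequentialStart q2 j
    split_ifs with h1j h2j h2j
    · simp [h1j, hC]
    · simpa [h1j] using sequentialStart_nonneg hq2 j
    · exact (sequentialStart_add_le_sum hq1 j).trans load1
    · exact ((hq j).elim h1j h2j).elim
  · change (if q2 j = 0 then (C : ℝ) else sequentialStart q2 j) + q2 j ≤ C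
    split_ifs with h2j
    · simp [h2j]
    · exact (sequentialStart_add_le_sum hq2 j).trans load2

theorem schedulable2_iff_sum_le (hjobs : ∀ j ∈ jobs, j.1 = 0 ∨ j.2 = 0) :
    schedulable2 jobs C ↔ (jobs.map Prod.fst).sum ≤ C ∧ (jobs.map Prod.snd).sum ≤ C :=
  ⟨schedulable2.sum_le, fun h => schedulable2_of_sum_le hjobs h.1 h.2⟩

end Schedule

theorem chainFrom_iff_of_target_eq_succ {β : Type} {P : List (ℕ × ℕ × β)}
    (hP : ∀ a ∈ P, a.2.1 = a.1 + 1) {u v : ℕ} :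
    chainFrom u P v ↔ v = u + P.length ∧ ∀ i (hi : i < P.length), P[i].1 = u + i := by
  induction P generalizing u with
  | nil => simp [chainFrom, eq_comm]
  | cons a r ih =>
    rw [List.forall_mem_cons] at hP
    simp only [chainFrom, ih hP.2, hP.1, List.length_cons]
    constructor
    · rintro ⟨rfl, rfl, hr⟩
      refine ⟨by omega, fun i hi => ?_⟩
      cases i with
      | zero => simp
      | succ i =>
        simp only [List.getElem_cons_succ, hr i (by simpa using hi)]
        omega
    · rintro ⟨rfl, h⟩
      have h0 := h 0 (by simp)
      simp only [List.getElem_cons_zero, add_zero] at h0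
      refine ⟨h0, by omega, fun i hi => ?_⟩
      have h' := h (i + 1) (by simpa using hi)
      simp only [List.getElem_cons_succ] at h'
      omega

section Path

variable {n : ℕ} (s : Fin n → ℕ)

def reductionPath (T : Finset (Fin n)) : List (ℕ × ℕ × ℕ × ℕ) :=
  List.ofFn fun k => ((k : ℕ), (k : ℕ) + 1, if k ∈ T then (s k, 0) else (0, s k))

theorem mem_reductionArcs {a : ℕ × ℕ × ℕ × ℕ} :
    a ∈ reductionArcs n s ↔
      ∃ k : Fin n, a = ((k : ℕ), (k : ℕ) + 1, s k, 0) ∨ a = ((k : ℕ), (k : ℕ) + 1, 0, s k) := by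
  simp [reductionArcs]

theorem target_eq_succ_of_mem_reductionArcs {a : ℕ × ℕ × ℕ × ℕ} (ha : a ∈ reductionArcs n s) :
    a.2.1 = a.1 + 1 := by
  obtain ⟨k, rfl | rfl⟩ := (mem_reductionArcs s).1 ha <;> rfl

variable {s}

theorem mem_reductionArcs_of_mem_reductionPath {T : Finset (Fin n)} {a : ℕ × ℕ × ℕ × ℕ}
    (ha : a ∈ reductionPath s T) : a ∈ reductionArcs n s := by
  obtain ⟨k, rfl⟩ := (List.mem_ofFn' _ _).1 ha
  exact (mem_reductionArcs s).2 ⟨k, by dsimp only; split_ifs <;> simp⟩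

variable (s)

theorem nodup_reductionPath (T : Finset (Fin n)) : (reductionPath s T).Nodup :=
  List.nodup_ofFn.2 fun j k h => Fin.ext (by simpa using congrArg Prod.fst h)

theorem chainFrom_reductionPath (T : Finset (Fin n)) : chainFrom 0 (reductionPath s T) n := by
  rw [chainFrom_iff_of_target_eq_succ fun a ha => target_eq_succ_of_mem_reductionArcs s
    (mem_reductionArcs_of_mem_reductionPath ha)]
  simp [reductionPath]

theorem exists_eq_reductionPath {P : List (ℕ × ℕ × ℕ × ℕ)}
    (hP : ∀ a ∈ P, a ∈ reductionArcs n s) (hc : chainFrom 0 P n) :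
    ∃ T, P = reductionPath s T := by
  obtain ⟨hn, hfst⟩ := (chainFrom_iff_of_target_eq_succ fun a ha =>
    target_eq_succ_of_mem_reductionArcs s (hP a ha)).1 hc
  have harc : ∀ k : Fin n, P[(k : ℕ)]'(by omega) = ((k : ℕ), (k : ℕ) + 1, s k, 0) ∨
      P[(k : ℕ)]'(by omega) = ((k : ℕ), (k : ℕ) + 1, 0, s k) := by
    intro k
    obtain ⟨k', hk'⟩ := (mem_reductionArcs s).1 (hP P[(k : ℕ)] (List.getElem_mem _))
    obtain rfl : k' = k := by
      have := hfst k (by omega)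
      ext
      rcases hk' with h | h <;> rw [h] at this <;> simpa using this
    exact hk'
  refine ⟨univ.filter fun k => P[(k : ℕ)]'(by omega) = ((k : ℕ), (k : ℕ) + 1, s k, 0), ?_⟩
  refine List.ext_getElem (by simp [reductionPath, hn]) fun i h1 h2 => ?_
  simp only [reductionPath, List.getElem_ofFn, mem_filter, mem_univ, true_and]
  rcases harc ⟨i, by omega⟩ with h | h <;> rw [h] <;> split_ifs with hT <;> simp at hT ⊢
  omega

theorem schedulable2_reductionPath_iff (T : Finset (Fin n)) (C : ℕ) :
    schedulable2 ((reductionPath s T).map fun a => (a.2.2.1, a.2.2.2)) C ↔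
      ∑ k ∈ T, s k ≤ C ∧ ∑ k ∈ Tᶜ, s k ≤ C := by
  have hjobs : (reductionPath s T).map (fun a => (a.2.2.1, a.2.2.2)) =
      List.ofFn fun k => if k ∈ T then (s k, 0) else (0, s k) := by
    simp only [reductionPath, List.map_ofFn]
    rfl
  rw [hjobs, schedulable2_iff_sum_le]
  · simp [List.map_ofFn, List.sum_ofFn, apply_ite, Finset.sum_ite, Finset.filter_notMem_eq_sdiff,
      Finset.compl_eq_univ_sdiff]
  · intro j hj
    obtain ⟨k, rfl⟩ := (List.mem_ofFn' _ _).1 hj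
    dsimp only
    split_ifs <;> simp

end Path

theorem reduction_correct_general (n C : ℕ) (s : Fin n → ℕ)
    (htot : ∑ k, s k = 2 * C) :
    (∃ P : List (ℕ × ℕ × ℕ × ℕ),
        (∀ a ∈ P, a ∈ reductionArcs n s) ∧ P.Nodup ∧ chainFrom 0 P n ∧
        schedulable2 (P.map fun a => (a.2.2.1, a.2.2.2)) C) ↔
      ∃ T : Finset (Fin n), ∑ k ∈ T, s k = C := by
  constructor
  · rintro ⟨P, hP, -, hc, hsched⟩
    obtain ⟨T, rfl⟩ := exists_eq_reductionPath s hP hc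
    obtain ⟨hT, hTc⟩ := (schedulable2_reductionPath_iff s T C).1 hsched
    have := sum_add_sum_compl T s
    exact ⟨T, by omega⟩
  · rintro ⟨T, hT⟩
    have := sum_add_sum_compl T s
    exact ⟨reductionPath s T, fun a => mem_reductionArcs_of_mem_reductionPath,
      nodup_reductionPath s T, chainFrom_reductionPath s T,
      (schedulable2_reductionPath_iff s T C).2 ⟨hT.le, by omega⟩⟩

/-- Given positive integers `s 0, …, s (n-1)` with total sum `2C`, there is a
`v₀–vₙ` path in the reduction graph whose jobs admit a two-machine flow shop
schedule with makespan at most `C` iff some subset of the `s k` sums to `C`. -/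
theorem reduction_correct (n C : ℕ) (s : Fin n → ℕ)
    (hpos : ∀ k, 0 < s k) (htot : ∑ k, s k = 2 * C) :
    (∃ P : List (ℕ × ℕ × ℕ × ℕ),
        (∀ a ∈ P, a ∈ reductionArcs n s) ∧ P.Nodup ∧ chainFrom 0 P n ∧
        schedulable2 (P.map fun a => (a.2.2.1, a.2.2.2)) C) ↔
      ∃ T : Finset (Fin n), ∑ k ∈ T, s k = C :=
  reduction_correct_general n C s htot

end PartitionReduction
end

section
/- The FD algorithm is an m-approximation: if P is a shortest s–t path with respect to arc weights w_j = sum_{i=1}^m p_{ij}, then any dense flow shop schedule of the jobs of P has makespan at most m times the optimal makespan of Fm|shortest path|C_max. -/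
/-!
A dense schedule leaves no moment before its makespan at which every machine is idle: at an idle
time `τ`, density forces every operation, machine by machine, to be finished by `τ`. Hence the
makespan of a dense schedule of the jobs of `P` is at most the total work `w(P)`. On the other hand
each machine processes the jobs of `Q` one at a time inside `[0, C']`, so `w(Q) ≤ m C'`. Since `P` is
shortest for `w`, `C ≤ w(P) ≤ w(Q) ≤ m C'`.
-/

namespace FD

variable {V A : Type}

/-- `IsChain tail head u P v`: the list of arcs `P` forms a directed path from
`u` to `v` in the digraph described by `tail` and `head`. -/
def IsChain (tail head : A → V) : V → List A → V → Prop
  | u, [], v => u = v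
  | u, a :: r, v => tail a = u ∧ IsChain tail head (head a) r v

/-- Feasibility of a flow shop schedule (start times `S`) of the jobs given by
the arc list `L`, with processing times `p i a` on machine `i`. -/
def FeasSched (m : ℕ) (p : Fin m → A → ℝ) (L : List A)
    (S : Fin m → Fin L.length → ℝ) : Prop :=
  (∀ i j, 0 ≤ S i j) ∧
  (∀ (i : Fin m) (h : (i : ℕ) + 1 < m) (j : Fin L.length),
    S i j + p i (L.get j) ≤ S ⟨(i : ℕ) + 1, h⟩ j) ∧
  (∀ (i : Fin m) (j k : Fin L.length), j ≠ k →
    S i j + p i (L.get j) ≤ S i k ∨ S i k + p i (L.get k) ≤ S i j)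

/-- Density: whenever machine `i` is idle at time `t`, no job is available for
processing on machine `i` at time `t`. -/
def DenseSched (m : ℕ) (p : Fin m → A → ℝ) (L : List A)
    (S : Fin m → Fin L.length → ℝ) : Prop :=
  ∀ (i : Fin m) (t : ℝ), 0 ≤ t →
    (∀ j, ¬ (S i j ≤ t ∧ t < S i j + p i (L.get j))) →
    ∀ j, t < S i j →
      ¬ ((i : ℕ) = 0 ∨
          S ⟨(i : ℕ) - 1, Nat.lt_of_le_of_lt (Nat.sub_le _ _) i.isLt⟩ j
            + p ⟨(i : ℕ) - 1, Nat.lt_of_le_of_lt (Nat.sub_le _ _) i.isLt⟩ (L.get j) ≤ t)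

/-- `C` is the makespan of the schedule `S` of the jobs of `L`. -/
def MakespanIs (m : ℕ) (p : Fin m → A → ℝ) (L : List A)
    (S : Fin m → Fin L.length → ℝ) (C : ℝ) : Prop :=
  (∀ i j, S i j + p i (L.get j) ≤ C) ∧
  (C = 0 ∨ ∃ i j, C = S i j + p i (L.get j))

open Function MeasureTheory Set

section Intervals

variable {ι : Type*} [Fintype ι] {a d : ι → ℝ}

theorem sum_le_of_pairwiseDisjoint_Ico_subset {lo hi : ℝ} (hd : ∀ j, 0 ≤ d j)
    (hdisj : Pairwise (Disjoint on fun j => Ico (a j) (a j + d j)))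
    (hlo : ∀ j, lo ≤ a j) (hhi : ∀ j, a j + d j ≤ hi) (hlohi : lo ≤ hi) :
    ∑ j, d j ≤ hi - lo := by
  have hsub : (⋃ j, Ico (a j) (a j + d j)) ⊆ Ico lo hi := fun x hx => by
    obtain ⟨j, hxa, hxd⟩ := mem_iUnion.mp hx
    exact ⟨(hlo j).trans hxa, hxd.trans_le (hhi j)⟩
  have hvol : ENNReal.ofReal (∑ j, d j) ≤ ENNReal.ofReal (hi - lo) :=
    calc ENNReal.ofReal (∑ j, d j) = ∑ j, volume (Ico (a j) (a j + d j)) := by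
          simp_rw [Real.volume_Ico, add_sub_cancel_left]
          exact ENNReal.ofReal_sum_of_nonneg fun j _ => hd j
      _ = volume (⋃ j, Ico (a j) (a j + d j)) :=
          (tsum_fintype _).symm.trans (measure_iUnion hdisj fun _ => measurableSet_Ico).symm
      _ ≤ ENNReal.ofReal (hi - lo) := (measure_mono hsub).trans_eq Real.volume_Ico
  exact (ENNReal.ofReal_le_ofReal_iff (sub_nonneg.mpr hlohi)).mp hvol

theorem sub_le_sum_of_Ico_subset_iUnion_Ico {lo hi : ℝ} (hd : ∀ j, 0 ≤ d j)
    (hcover : Ico lo hi ⊆ ⋃ j, Ico (a j) (a j + d j)) :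
    hi - lo ≤ ∑ j, d j := by
  have hvol : ENNReal.ofReal (hi - lo) ≤ ENNReal.ofReal (∑ j, d j) :=
    calc ENNReal.ofReal (hi - lo) = volume (Ico lo hi) := Real.volume_Ico.symm
      _ ≤ ∑ j, volume (Ico (a j) (a j + d j)) :=
          (measure_mono hcover).trans (measure_iUnion_fintype_le volume _)
      _ = ENNReal.ofReal (∑ j, d j) := by
          simp_rw [Real.volume_Ico, add_sub_cancel_left]
          exact (ENNReal.ofReal_sum_of_nonneg fun j _ => hd j).symm
  exact (ENNReal.ofReal_le_ofReal_iff (Finset.sum_nonneg fun j _ => hd j)).mp hvol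

end Intervals

section Schedules

variable {m : ℕ} {p : Fin m → A → ℝ} {L : List A} {S : Fin m → Fin L.length → ℝ} {C : ℝ}

theorem MakespanIs.nonneg (hp : ∀ i a, 0 ≤ p i a) (hS : FeasSched m p L S)
    (hC : MakespanIs m p L S C) : 0 ≤ C := by
  rcases hC.2 with hC0 | ⟨i, j, hCij⟩
  · exact hC0.ge
  · exact hCij ▸ add_nonneg (hS.1 i j) (hp i _)

theorem FeasSched.sum_le_makespan (hp : ∀ i a, 0 ≤ p i a) (hS : FeasSched m p L S)
    (hC : MakespanIs m p L S C) (i : Fin m) : ∑ j, p i (L.get j) ≤ C := by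
  have hdisj : Pairwise (Disjoint on fun j => Ico (S i j) (S i j + p i (L.get j))) :=
    fun j k hjk => by
      rw [Function.onFun, Ico_disjoint_Ico]
      rcases hS.2.2 i j k hjk with h | h
      · exact (min_le_left _ _).trans (h.trans (le_max_right _ _))
      · exact (min_le_right _ _).trans (h.trans (le_max_left _ _))
  simpa using sum_le_of_pairwiseDisjoint_Ico_subset (fun j => hp i _) hdisj (hS.1 i)
    (hC.1 i) (hC.nonneg hp hS)

theorem FeasSched.sum_work_le (hp : ∀ i a, 0 ≤ p i a) (hS : FeasSched m p L S)
    (hC : MakespanIs m p L S C) : (L.map fun a => ∑ i, p i a).sum ≤ m * C :=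
  calc (L.map fun a => ∑ i, p i a).sum = ∑ i, ∑ j, p i (L.get j) := by
        rw [← Fin.sum_univ_fun_getElem, Finset.sum_comm]; rfl
    _ ≤ ∑ _i : Fin m, C := Finset.sum_le_sum fun i _ => hS.sum_le_makespan hp hC i
    _ = m * C := by simp

theorem DenseSched.completion_le_of_idle (hS : DenseSched m p L S) {τ : ℝ} (hτ : 0 ≤ τ)
    (hidle : ∀ i j, τ ∉ Ico (S i j) (S i j + p i (L.get j))) (i : Fin m) (j : Fin L.length) :
    S i j + p i (L.get j) ≤ τ := by
  suffices ∀ n (i : Fin m), (i : ℕ) = n → ∀ j, S i j + p i (L.get j) ≤ τ from this _ i rfl j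
  intro n
  induction n with
  | zero =>
    intro i hi j
    have hstart : S i j ≤ τ := not_lt.mp fun hlt => hS i τ hτ (hidle i) j hlt (Or.inl hi)
    exact not_lt.mp fun hlt => hidle i j ⟨hstart, hlt⟩
  | succ n ih =>
    intro i hi j
    have hstart : S i j ≤ τ := not_lt.mp fun hlt =>
      hS i τ hτ (hidle i) j hlt (Or.inr (ih _ (by simp only; omega) j))
    exact not_lt.mp fun hlt => hidle i j ⟨hstart, hlt⟩

theorem DenseSched.makespan_le_sum_work (hp : ∀ i a, 0 ≤ p i a) (hS : DenseSched m p L S)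
    (hC : MakespanIs m p L S C) : C ≤ (L.map fun a => ∑ i, p i a).sum := by
  have hwork : (L.map fun a => ∑ i, p i a).sum =
      ∑ ij : Fin m × Fin L.length, p ij.1 (L.get ij.2) := by
    rw [← Fin.sum_univ_fun_getElem, Fintype.sum_prod_type, Finset.sum_comm]; rfl
  rw [hwork]
  rcases hC.2 with hC0 | ⟨i₀, j₀, hCij⟩
  · exact hC0 ▸ Finset.sum_nonneg fun _ _ => hp _ _
  have hcover : Ico 0 C ⊆ ⋃ ij : Fin m × Fin L.length,
      Ico (S ij.1 ij.2) (S ij.1 ij.2 + p ij.1 (L.get ij.2)) := by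
    rintro τ ⟨hτ, hτC⟩
    by_contra hbusy
    rw [mem_iUnion, not_exists] at hbusy
    exact (hS.completion_le_of_idle hτ (fun i j => hbusy (i, j)) i₀ j₀).not_gt (hCij ▸ hτC)
  simpa using sub_le_sum_of_Ico_subset_iUnion_Ico (fun _ => hp _ _) hcover

end Schedules

theorem fd_m_approximation_general (m : ℕ)
    (tail head : A → V) (s t : V)
    (p : Fin m → A → ℝ) (hp : ∀ i a, 0 ≤ p i a)
    (P : List A)
    (hshort : ∀ R : List A, IsChain tail head s R t →
      (P.map fun a => ∑ i, p i a).sum ≤ (R.map fun a => ∑ i, p i a).sum)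
    (S : Fin m → Fin P.length → ℝ)
    (hdense : DenseSched m p P S)
    (C : ℝ) (hC : MakespanIs m p P S C)
    (Q : List A) (hQ : IsChain tail head s Q t)
    (S' : Fin m → Fin Q.length → ℝ) (hfeas' : FeasSched m p Q S')
    (C' : ℝ) (hC' : MakespanIs m p Q S' C') :
    C ≤ m * C' :=
  calc C ≤ (P.map fun a => ∑ i, p i a).sum := hdense.makespan_le_sum_work hp hC
    _ ≤ (Q.map fun a => ∑ i, p i a).sum := hshort Q hQ
    _ ≤ m * C' := hfeas'.sum_work_le hp hC'

/-- If `P` is a shortest `s–t` path for the arc weights `w a = ∑ i, p i a`,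
then the makespan `C` of any dense flow shop schedule of the jobs of `P` is at
most `m` times the makespan `C'` of any feasible solution `(Q, S')` of
`Fm|shortest path|C_max`; in particular `C ≤ m · OPT`. -/
theorem fd_m_approximation (m : ℕ) (hm : 0 < m)
    (tail head : A → V) (s t : V)
    (p : Fin m → A → ℝ) (hp : ∀ i a, 0 ≤ p i a)
    (P : List A) (hP : IsChain tail head s P t)
    (hshort : ∀ R : List A, IsChain tail head s R t →
      (P.map fun a => ∑ i, p i a).sum ≤ (R.map fun a => ∑ i, p i a).sum)
    (S : Fin m → Fin P.length → ℝ)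
    (hfeas : FeasSched m p P S) (hdense : DenseSched m p P S)
    (C : ℝ) (hC : MakespanIs m p P S C)
    (Q : List A) (hQ : IsChain tail head s Q t)
    (S' : Fin m → Fin Q.length → ℝ) (hfeas' : FeasSched m p Q S')
    (C' : ℝ) (hC' : MakespanIs m p Q S' C') :
    C ≤ m * C' :=
  fd_m_approximation_general m tail head s t p hp P hshort S hdense C hC Q hQ S' hfeas' C' hC'

end FD
end

section
/- In the three-machine schedule produced by the RS aggregation algorithm, if the critical jobs satisfy u = v (a single critical job J_u) and p_{1u} ≥ p_{3u}, then C_max ≤ sum_{j∈J} p_{1j} + p_{1u} + p_{2u} + p_{3u}. -/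
/-! Every job after the critical job `u` has `p₃ ≤ p₁` by the Johnson order, so the machine-3
part of the critical path beyond `u` is dominated by the machine-1 load of the same jobs; the
critical path therefore costs at most the whole machine-1 load plus `p₂ u + p₃ u ≤ p₁ u + p₂ u + p₃ u`. -/

open Finset

namespace Finset

variable {ι M : Type*} [Fintype ι] [LinearOrder ι] [LocallyFiniteOrderBot ι]
  [LocallyFiniteOrderTop ι] [AddCommMonoid M]

theorem sum_Iic_add_sum_Ioi (f : ι → M) (u : ι) :
    ∑ j ∈ Iic u, f j + ∑ j ∈ Ioi u, f j = ∑ j, f j := by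
  rw [← filter_ge_eq_Iic, ← filter_lt_eq_Ioi]
  simp_rw [← not_le]
  exact sum_filter_add_sum_filter_not univ (· ≤ u) f

theorem sum_Iic_add_sum_Ici_le_sum_add [PartialOrder M] [IsOrderedAddMonoid M]
    (f g : ι → M) (u : ι) (hgf : ∀ j, u < j → g j ≤ f j) :
    ∑ j ∈ Iic u, f j + ∑ j ∈ Ici u, g j ≤ ∑ j, f j + g u := by
  calc ∑ j ∈ Iic u, f j + ∑ j ∈ Ici u, g j
      = ∑ j ∈ Iic u, f j + (g u + ∑ j ∈ Ioi u, g j) := by rw [add_sum_Ioi_eq_sum_Ici]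
    _ ≤ ∑ j ∈ Iic u, f j + (g u + ∑ j ∈ Ioi u, f j) := by
        gcongr with j hj
        exact hgf j (mem_Ioi.1 hj)
    _ = ∑ j, f j + g u := by rw [← sum_Iic_add_sum_Ioi f u]; abel

end Finset

theorem rs_single_critical_job_bound_general
    (n : ℕ) (p1 p2 p3 : Fin n → ℝ)
    (hp1 : ∀ j, 0 ≤ p1 j)
    -- Johnson order of the artificial two-machine problem
    -- (`a_j = p₁ j + p₂ j`, `b_j = p₂ j + p₃ j`): every job scheduled after a
    -- job with `a ≥ b` (i.e. `p₁ ≥ p₃`) also satisfies `p₁ ≥ p₃`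
    (hJ : ∀ k l : Fin n, k < l → p3 k ≤ p1 k → p3 l ≤ p1 l)
    (u : Fin n) (hu : p3 u ≤ p1 u) (Cmax : ℝ)
    -- `u` is the single critical job of the RS schedule
    (hC : Cmax = (∑ j ∈ Finset.univ.filter (fun j => j ≤ u), p1 j) + p2 u +
                 (∑ j ∈ Finset.univ.filter (fun j => u ≤ j), p3 j)) :
    Cmax ≤ (∑ j, p1 j) + (p1 u + p2 u + p3 u) := by
  have htail : ∑ j ∈ Iic u, p1 j + ∑ j ∈ Ici u, p3 j ≤ ∑ j, p1 j + p3 u :=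
    sum_Iic_add_sum_Ici_le_sum_add p1 p3 u fun j huj => hJ u j huj hu
  rw [filter_ge_eq_Iic, filter_le_eq_Ici] at hC
  linarith [hp1 u]

/-- In the three-machine RS schedule (jobs indexed in schedule
order), if there is a single critical job `u` (i.e. `u = v`) and
`p₁ u ≥ p₃ u`, then `Cmax ≤ ∑ j, p₁ j + p₁ u + p₂ u + p₃ u`. -/
theorem rs_single_critical_job_bound
    (n : ℕ) (p1 p2 p3 : Fin n → ℝ)
    (hp1 : ∀ j, 0 ≤ p1 j) (hp2 : ∀ j, 0 ≤ p2 j) (hp3 : ∀ j, 0 ≤ p3 j)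
    -- Johnson order of the artificial two-machine problem
    -- (`a_j = p₁ j + p₂ j`, `b_j = p₂ j + p₃ j`): every job scheduled after a
    -- job with `a ≥ b` (i.e. `p₁ ≥ p₃`) also satisfies `p₁ ≥ p₃`
    (hJ : ∀ k l : Fin n, k < l → p3 k ≤ p1 k → p3 l ≤ p1 l)
    (u : Fin n) (hu : p3 u ≤ p1 u) (Cmax : ℝ)
    -- `u` is the single critical job of the RS schedule
    (hC : Cmax = (∑ j ∈ Finset.univ.filter (fun j => j ≤ u), p1 j) + p2 u +
                 (∑ j ∈ Finset.univ.filter (fun j => u ≤ j), p3 j)) :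
    Cmax ≤ (∑ j, p1 j) + (p1 u + p2 u + p3 u) :=
  rs_single_critical_job_bound_general n p1 p2 p3 hp1 hJ u hu Cmax hC
end

section
/- In the three-machine schedule produced by the RS aggregation algorithm, if the critical jobs satisfy u < v, then C_max ≤ sum_{j∈J} p_{1j} + sum_{j∈J} p_{2j}. -/
/-!
The jobs from `v` on all come after `u`, and `p₃ u ≤ p₁ u`, so by Johnson's order each of them
has `p₃ ≤ p₁`: the machine-3 block is dominated by a machine-1 block, which is disjoint from the
machine-1 block of jobs up to `u` because `u < v`.
-/

open Finset

section

variable {ι M : Type*} [Fintype ι] [LinearOrder ι]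
  [AddCommMonoid M] [PartialOrder M] [IsOrderedAddMonoid M]

theorem sum_filter_le_add_sum_filter_ge_le_sum {f : ι → M} (hf : ∀ j, 0 ≤ f j) {u v : ι}
    (huv : u < v) :
    (∑ j ∈ univ.filter (fun j => j ≤ u), f j) + (∑ j ∈ univ.filter (fun j => v ≤ j), f j) ≤
      ∑ j, f j := by
  have hdisj : Disjoint (univ.filter (fun j => j ≤ u)) (univ.filter (fun j => v ≤ j)) :=
    disjoint_filter.mpr fun _ _ hju hvj => (hju.trans_lt huv).not_ge hvj
  rw [← sum_union hdisj]
  exact sum_le_sum_of_subset_of_nonneg (subset_univ _) fun j _ _ => hf j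

theorem sum_filter_ge_le_of_le_persists {f g : ι → M}
    (hfg : ∀ k l, k < l → g k ≤ f k → g l ≤ f l) {u v : ι} (huv : u < v) (hu : g u ≤ f u) :
    ∑ j ∈ univ.filter (fun j => v ≤ j), g j ≤ ∑ j ∈ univ.filter (fun j => v ≤ j), f j :=
  sum_le_sum fun j hj => hfg u j (huv.trans_le (mem_filter.mp hj).2) hu

end

theorem rs_two_critical_jobs_bound_general
    (n : ℕ) (p1 p2 p3 : Fin n → ℝ)
    (hp1 : ∀ j, 0 ≤ p1 j) (hp2 : ∀ j, 0 ≤ p2 j)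
    -- Johnson order of the artificial two-machine problem
    -- (`a_j = p₁ j + p₂ j`, `b_j = p₂ j + p₃ j`): every job scheduled after a
    -- job with `a ≥ b` (i.e. `p₁ ≥ p₃`) also satisfies `p₁ ≥ p₃`
    (hJ : ∀ k l : Fin n, k < l → p3 k ≤ p1 k → p3 l ≤ p1 l)
    (u v : Fin n) (huv : u < v) (hu : p3 u ≤ p1 u) (Cmax : ℝ)
    -- `u` and `v` are the critical jobs of the RS schedule
    (hC : Cmax = (∑ j ∈ Finset.univ.filter (fun j => j ≤ u), p1 j) +
                 (∑ j ∈ Finset.univ.filter (fun j => u ≤ j ∧ j ≤ v), p2 j) +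
                 (∑ j ∈ Finset.univ.filter (fun j => v ≤ j), p3 j)) :
    Cmax ≤ (∑ j, p1 j) + (∑ j, p2 j) := by
  have htail := sum_filter_ge_le_of_le_persists hJ huv hu
  have hp1_split := sum_filter_le_add_sum_filter_ge_le_sum hp1 huv
  have hp2_sub : ∑ j ∈ univ.filter (fun j => u ≤ j ∧ j ≤ v), p2 j ≤ ∑ j, p2 j :=
    sum_le_sum_of_subset_of_nonneg (subset_univ _) fun j _ _ => hp2 j
  rw [hC]
  linarith

/-- In the three-machine RS schedule (jobs indexed in schedule
order), if the critical jobs satisfy `u < v` (and, as in the corresponding case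
of the analysis, `p₁ u ≥ p₃ u`), then `Cmax ≤ ∑ j, p₁ j + ∑ j, p₂ j`. -/
theorem rs_two_critical_jobs_bound
    (n : ℕ) (p1 p2 p3 : Fin n → ℝ)
    (hp1 : ∀ j, 0 ≤ p1 j) (hp2 : ∀ j, 0 ≤ p2 j) (hp3 : ∀ j, 0 ≤ p3 j)
    -- Johnson order of the artificial two-machine problem
    -- (`a_j = p₁ j + p₂ j`, `b_j = p₂ j + p₃ j`): every job scheduled after a
    -- job with `a ≥ b` (i.e. `p₁ ≥ p₃`) also satisfies `p₁ ≥ p₃`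
    (hJ : ∀ k l : Fin n, k < l → p3 k ≤ p1 k → p3 l ≤ p1 l)
    (u v : Fin n) (huv : u < v) (hu : p3 u ≤ p1 u) (Cmax : ℝ)
    -- `u` and `v` are the critical jobs of the RS schedule
    (hC : Cmax = (∑ j ∈ Finset.univ.filter (fun j => j ≤ u), p1 j) +
                 (∑ j ∈ Finset.univ.filter (fun j => u ≤ j ∧ j ≤ v), p2 j) +
                 (∑ j ∈ Finset.univ.filter (fun j => v ≤ j), p3 j)) :
    Cmax ≤ (∑ j, p1 j) + (∑ j, p2 j) :=
  rs_two_critical_jobs_bound_general n p1 p2 p3 hp1 hp2 hJ u v huv hu Cmax hC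
end
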